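/- arXiv:2512.10057 — 3 statements merged into one kernel-verified Lean document; each statement's English description precedes it below -/
import Mathlib

section
/- Let H : [0,T] → (0,1) be Hölder continuous with exponent γ > sup_t H(t). Fix t ∈ [0,T]. Then, as ε → 0⁺, ε^{2H(t+ε)} = ε^{2H(t)} (1 + O(ε^λ)), where λ = min(γ − H(t), (γ + H(t))/2) > 0; explicitly, there exist constants C > 0 and ε₀ > 0 such that |ε^{2H(t+ε)} − ε^{2H(t)}| ≤ C ε^{2H(t)+λ} for all 0 < ε ≤ ε₀ with t+ε ≤ T. -/
/-- Local variance asymptotics for TV-fBm: under Hölder continuity with exponent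
`γ > sup H`, `ε^(2H(t+ε)) = ε^(2H(t))(1 + O(ε^λ))` with
`λ = min(γ - H(t), (γ + H(t))/2) > 0`. -/
theorem stmt7 (T C_H γ : ℝ) (hT : 0 < T) (hC : 0 < C_H)
    (H : ℝ → ℝ) (hmem : ∀ u ∈ Set.Icc (0:ℝ) T, H u ∈ Set.Ioo (0:ℝ) 1)
    (hhold : ∀ u ∈ Set.Icc (0:ℝ) T, ∀ v ∈ Set.Icc (0:ℝ) T, |H u - H v| ≤ C_H * |u - v| ^ γ)
    (hγ : sSup (H '' Set.Icc (0:ℝ) T) < γ)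
    (t : ℝ) (ht : t ∈ Set.Icc (0:ℝ) T) :
    0 < min (γ - H t) ((γ + H t) / 2) ∧
    ∃ C > (0:ℝ), ∃ ε₀ > (0:ℝ), ∀ ε : ℝ, 0 < ε → ε ≤ ε₀ → t + ε ≤ T →
      |ε ^ (2 * H (t + ε)) - ε ^ (2 * H t)| ≤
        C * ε ^ (2 * H t + min (γ - H t) ((γ + H t) / 2)) := by
  have hHt : H t ∈ Set.Ioo (0:ℝ) 1 := hmem t ht
  have hbdd : BddAbove (H '' Set.Icc (0:ℝ) T) := by
    refine ⟨1, ?_⟩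
    rintro x ⟨u, hu, rfl⟩
    exact (hmem u hu).2.le
  have hHtγ : H t < γ :=
    lt_of_le_of_lt (le_csSup hbdd ⟨t, ht, rfl⟩) hγ
  set s : ℝ := (γ - H t) / 2 with hs_def
  have hs : 0 < s := by simp only [hs_def]; linarith
  have hγs : γ - s = (γ + H t) / 2 := by simp only [hs_def]; ring
  have hγspos : 0 < γ - s := by rw [hγs]; linarith [hHt.1]
  set lam : ℝ := min (γ - H t) ((γ + H t) / 2) with hlam_def
  have hlampos : 0 < lam := lt_min (by linarith) (by linarith [hHt.1])
  have hlamle : lam ≤ γ - s := by rw [hγs]; exact min_le_right _ _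
  refine ⟨hlampos, 4 * C_H / s, by positivity, min 1 ((s / (2 * C_H)) ^ (1 / (γ - s))), ?_, ?_⟩
  · exact lt_min one_pos (Real.rpow_pos_of_pos (by positivity) _)
  intro ε hε hε₀ htT
  have hε1 : ε ≤ 1 := le_trans hε₀ (min_le_left _ _)
  have htε : t + ε ∈ Set.Icc (0:ℝ) T := ⟨by linarith [ht.1], htT⟩
  have hδ : |H (t + ε) - H t| ≤ C_H * ε ^ γ := by
    have := hhold (t + ε) htε t ht
    rwa [show t + ε - t = ε by ring, abs_of_pos hε] at this
  -- bound on |log ε|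
  have hlog : |Real.log ε| ≤ ε ^ (-s) / s := by
    rw [abs_of_nonpos (Real.log_nonpos hε.le hε1)]
    have := Real.log_le_rpow_div (x := ε⁻¹) (by positivity) hs
    rwa [Real.log_inv, Real.inv_rpow hε.le, ← Real.rpow_neg hε.le] at this
  set x : ℝ := Real.log ε * (2 * (H (t + ε) - H t)) with hx_def
  have hxbound : |x| ≤ 2 * C_H / s * ε ^ (γ - s) := by
    calc |x| = |Real.log ε| * (2 * |H (t + ε) - H t|) := by
            rw [hx_def, abs_mul, abs_mul, abs_two]
      _ ≤ (ε ^ (-s) / s) * (2 * (C_H * ε ^ γ)) := by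
            apply mul_le_mul hlog (by linarith) (by positivity) (by positivity)
      _ = 2 * C_H / s * (ε ^ (-s) * ε ^ γ) := by ring
      _ = 2 * C_H / s * ε ^ (γ - s) := by
            rw [← Real.rpow_add hε]; ring_nf
  have hεγs : ε ^ (γ - s) ≤ s / (2 * C_H) := by
    have h1 : ε ≤ (s / (2 * C_H)) ^ (1 / (γ - s)) := le_trans hε₀ (min_le_right _ _)
    have h2 : ε ^ (γ - s) ≤ ((s / (2 * C_H)) ^ (1 / (γ - s))) ^ (γ - s) :=
      Real.rpow_le_rpow hε.le h1 hγspos.le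
    rwa [← Real.rpow_mul (by positivity), one_div, inv_mul_cancel₀ hγspos.ne',
      Real.rpow_one] at h2
  have hx1 : |x| ≤ 1 := by
    calc |x| ≤ 2 * C_H / s * ε ^ (γ - s) := hxbound
      _ ≤ 2 * C_H / s * (s / (2 * C_H)) := by
          apply mul_le_mul_of_nonneg_left hεγs (by positivity)
      _ = 1 := by field_simp
  have hexp : |Real.exp x - 1| ≤ 2 * |x| := Real.abs_exp_sub_one_le hx1
  have hrw : ε ^ (2 * H (t + ε)) - ε ^ (2 * H t)
      = ε ^ (2 * H t) * (Real.exp x - 1) := by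
    have : ε ^ (2 * H (t + ε)) = ε ^ (2 * H t) * ε ^ (2 * (H (t + ε) - H t)) := by
      rw [← Real.rpow_add hε]; ring_nf
    rw [this, Real.rpow_def_of_pos hε (2 * (H (t + ε) - H t)), ← hx_def]
    ring
  have hεlam : ε ^ (γ - s) ≤ ε ^ lam :=
    Real.rpow_le_rpow_of_exponent_ge hε hε1 hlamle
  calc |ε ^ (2 * H (t + ε)) - ε ^ (2 * H t)|
      = ε ^ (2 * H t) * |Real.exp x - 1| := by
        rw [hrw, abs_mul, abs_of_pos (Real.rpow_pos_of_pos hε _)]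
    _ ≤ ε ^ (2 * H t) * (2 * (2 * C_H / s * ε ^ lam)) := by
        apply mul_le_mul_of_nonneg_left _ (Real.rpow_pos_of_pos hε _).le
        calc |Real.exp x - 1| ≤ 2 * |x| := hexp
          _ ≤ 2 * (2 * C_H / s * ε ^ (γ - s)) := by linarith
          _ ≤ 2 * (2 * C_H / s * ε ^ lam) := by
              have := mul_le_mul_of_nonneg_left hεlam (by positivity : (0:ℝ) ≤ 2 * C_H / s)
              linarith
    _ = 4 * C_H / s * (ε ^ (2 * H t) * ε ^ lam) := by ring
    _ = 4 * C_H / s * ε ^ (2 * H t + lam) := by rw [← Real.rpow_add hε]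
end

section
/- Let 0 < u < v with v ≥ 2u and 1/2 < H_u, H_v < 1. Then ∫_0^u (u−s)^{H_u−3/2}(v−s)^{H_v−3/2} ds = (u^{H_u−1/2}(v−u)^{H_v−3/2}/(H_u−1/2)) · ₂F₁(3/2−H_v, H_u−1/2; H_u+1/2; −u/(v−u)), where ₂F₁ is the Gaussian hypergeometric function. -/
/-! Substituting `s = u - u t` turns the integral into `u^(H_u-1/2) (v-u)^(H_v-3/2)` times
`∫_0^1 t^(H_u-3/2) (1 + u t/(v-u))^(H_v-3/2) dt`, which is the Euler integral of `₂F₁` with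
`c = b + 1`; then `(1-t)^(c-b-1) = 1` and `Γ(b+1)/(Γ(b)Γ(1)) = b`. -/

open MeasureTheory Real Set

/-- The Gaussian hypergeometric function `₂F₁(a,b;c;z)`, given (for the relevant
parameter range) by its Euler integral representation
`(Γ(c)/(Γ(b)Γ(c-b))) ∫_0^1 t^(b-1)(1-t)^(c-b-1)(1-zt)^(-a) dt`. -/
noncomputable def gaussHyper (a b c z : ℝ) : ℝ :=
  (Real.Gamma c / (Real.Gamma b * Real.Gamma (c - b))) *
    ∫ t in Set.Ioo (0:ℝ) 1, t ^ (b - 1) * (1 - t) ^ (c - b - 1) * (1 - z * t) ^ (-a)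

theorem setIntegral_Ioo_zero_eq_smul_setIntegral_Ioo_zero_one {E : Type*}
    [NormedAddCommGroup E] [NormedSpace ℝ E] (f : ℝ → E) {u : ℝ} (hu : 0 < u) :
    ∫ s in Ioo 0 u, f s = u • ∫ t in Ioo 0 1, f (u - u * t) := by
  rw [← integral_Ioc_eq_integral_Ioo, ← integral_Ioc_eq_integral_Ioo,
    ← intervalIntegral.integral_of_le hu.le, ← intervalIntegral.integral_of_le zero_le_one,
    intervalIntegral.integral_comp_sub_mul f hu.ne', smul_inv_smul₀ hu.ne']
  simp

theorem setIntegral_Ioo_sub_rpow_mul_sub_rpow {u v : ℝ} (hu : 0 < u) (huv : u < v) (a b : ℝ) :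
    ∫ s in Ioo 0 u, (u - s) ^ a * (v - s) ^ b =
      u ^ (a + 1) * (v - u) ^ b * ∫ t in Ioo 0 1, t ^ a * (1 + u / (v - u) * t) ^ b := by
  have hvu : 0 < v - u := by linarith
  rw [setIntegral_Ioo_zero_eq_smul_setIntegral_Ioo_zero_one _ hu, smul_eq_mul,
    ← integral_const_mul, ← integral_const_mul]
  refine setIntegral_congr_fun measurableSet_Ioo fun t ⟨ht, _⟩ => ?_
  have hsub : v - (u - u * t) = (v - u) * (1 + u / (v - u) * t) := by
    rw [mul_add, mul_one, ← mul_assoc, mul_div_cancel₀ _ hvu.ne']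
    ring
  have hpos : 0 ≤ 1 + u / (v - u) * t := by positivity
  rw [sub_sub_cancel, hsub, mul_rpow hu.le ht.le, mul_rpow hvu.le hpos, rpow_add_one hu.ne']
  ring

theorem gaussHyper_add_one (a z : ℝ) {b : ℝ} (hb : 0 < b) :
    gaussHyper a b (b + 1) z = b * ∫ t in Ioo 0 1, t ^ (b - 1) * (1 - z * t) ^ (-a) := by
  have hΓ : Gamma b ≠ 0 := (Gamma_pos_of_pos hb).ne'
  simp only [gaussHyper, add_sub_cancel_left, sub_self, rpow_zero, mul_one, Gamma_one,
    Gamma_add_one hb.ne', mul_div_cancel_right₀ _ hΓ]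

theorem stmt12_general (u v Hu Hv : ℝ) (hu : 0 < u) (huv : u < v)
    (hHu : Hu ∈ Set.Ioo (1/2 : ℝ) 1) :
    (∫ s in Set.Ioo (0:ℝ) u, (u - s) ^ (Hu - 3/2) * (v - s) ^ (Hv - 3/2)) =
      (u ^ (Hu - 1/2) * (v - u) ^ (Hv - 3/2) / (Hu - 1/2)) *
        gaussHyper (3/2 - Hv) (Hu - 1/2) (Hu + 1/2) (-(u / (v - u))) := by
  have hb : 0 < Hu - 1/2 := by linarith [hHu.1]
  have hc : Hu + 1/2 = (Hu - 1/2) + 1 := by ring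
  rw [setIntegral_Ioo_sub_rpow_mul_sub_rpow hu huv, hc, gaussHyper_add_one _ _ hb,
    div_mul_eq_mul_div, mul_div_assoc, mul_div_cancel_left₀ _ hb.ne']
  congr 2
  · congr 1
    ring
  · funext t
    congr 2 <;> ring

/-- Closed-form hypergeometric representation of the singular covariance
integral: for `0 < u < v`, `v ≥ 2u` and `1/2 < H_u, H_v < 1`,
`∫_0^u (u-s)^(H_u-3/2)(v-s)^(H_v-3/2) ds
  = (u^(H_u-1/2)(v-u)^(H_v-3/2)/(H_u-1/2)) ₂F₁(3/2-H_v, H_u-1/2; H_u+1/2; -u/(v-u))`. -/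
theorem stmt12 (u v Hu Hv : ℝ) (hu : 0 < u) (huv : u < v) (hv2u : 2 * u ≤ v)
    (hHu : Hu ∈ Set.Ioo (1/2 : ℝ) 1) (hHv : Hv ∈ Set.Ioo (1/2 : ℝ) 1) :
    (∫ s in Set.Ioo (0:ℝ) u, (u - s) ^ (Hu - 3/2) * (v - s) ^ (Hv - 3/2)) =
      (u ^ (Hu - 1/2) * (v - u) ^ (Hv - 3/2) / (Hu - 1/2)) *
        gaussHyper (3/2 - Hv) (Hu - 1/2) (Hu + 1/2) (-(u / (v - u))) :=
  stmt12_general u v Hu Hv hu huv hHu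
end

section
/- Let h : [0,t+ε] → [h_min, h_max] ⊂ (0,1) be measurable, and define for small ε ∈ (0,1] the quantity N = ∫_t^{t+ε} 2h(s)(t+ε−s)^{2h(s)−1} ds and H₋ = inf_{s∈[t,t+ε]} h(s), H₊ = sup_{s∈[t,t+ε]} h(s). Then (h_min/h_max) ε^{2H₊} ≤ N ≤ (h_max/h_min) ε^{2H₋}. -/
/-!
Write `K(ν, u) = 2ν u^(2ν-1)`, so that `∫_a^b K(ν, b - s) ds = (b - a)^(2ν)` for `ν > 0`.
Since `ν ↦ u^ν` is decreasing for `u ∈ (0, 1]` and `ε ≤ 1`, whenever `m ≤ h ≤ M` on `(t, t + ε)`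
the integrand `K(h(s), t + ε - s)` lies between `(m/M) K(M, t + ε - s)` and `(M/m) K(m, t + ε - s)`;
integrating gives `(m/M) ε^(2M) ≤ N ≤ (M/m) ε^(2m)`. Take `(m, M) = (h_min, H₊)` for the lower bound
and `(H₋, h_max)` for the upper one.
-/

open MeasureTheory Set Real

noncomputable def powKernel (ν u : ℝ) : ℝ := 2 * ν * u ^ (2 * ν - 1)

section

variable {a b ν : ℝ}

theorem intervalIntegrable_powKernel_sub (hν : 0 < ν) :
    IntervalIntegrable (fun s => powKernel ν (b - s)) volume a b := by
  have := (intervalIntegral.intervalIntegrable_rpow' (a := b - a) (b := b - b)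
    (by linarith : -1 < 2 * ν - 1)).comp_sub_left b
  simpa [powKernel] using this.const_mul (2 * ν)

theorem integrableOn_Ioo_powKernel_sub (hν : 0 < ν) :
    IntegrableOn (fun s => powKernel ν (b - s)) (Ioo a b) :=
  (intervalIntegrable_powKernel_sub hν).1.mono_set Ioo_subset_Ioc_self

theorem setIntegral_Ioo_powKernel_sub (hν : 0 < ν) (hab : a ≤ b) :
    ∫ s in Ioo a b, powKernel ν (b - s) = (b - a) ^ (2 * ν) := by
  rw [← integral_Ioc_eq_integral_Ioo, ← intervalIntegral.integral_of_le hab]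
  simp only [powKernel]
  rw [intervalIntegral.integral_const_mul,
    intervalIntegral.integral_comp_sub_left (fun u => u ^ (2 * ν - 1)) b,
    integral_rpow (Or.inl (by linarith)), sub_self, sub_add_cancel,
    zero_rpow (by positivity), sub_zero]
  field_simp

theorem powKernel_le_div_mul_powKernel {m M u : ℝ} (hm : 0 < m) (hmν : m ≤ ν) (hνM : ν ≤ M)
    (hu₀ : 0 < u) (hu₁ : u ≤ 1) : powKernel ν u ≤ M / m * powKernel m u := by
  have hdecay : u ^ (2 * ν - 1) ≤ u ^ (2 * m - 1) :=
    rpow_le_rpow_of_exponent_ge hu₀ hu₁ (by linarith)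
  calc powKernel ν u ≤ 2 * M * u ^ (2 * m - 1) := by
        unfold powKernel; gcongr; linarith
    _ = M / m * powKernel m u := by unfold powKernel; field_simp

theorem div_mul_powKernel_le_powKernel {m M u : ℝ} (hm : 0 < m) (hmν : m ≤ ν) (hνM : ν ≤ M)
    (hu₀ : 0 < u) (hu₁ : u ≤ 1) : m / M * powKernel M u ≤ powKernel ν u := by
  have hdecay : u ^ (2 * M - 1) ≤ u ^ (2 * ν - 1) :=
    rpow_le_rpow_of_exponent_ge hu₀ hu₁ (by linarith)
  have hM : 0 < M := by linarith
  calc m / M * powKernel M u = 2 * m * u ^ (2 * M - 1) := by unfold powKernel; field_simp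
    _ ≤ powKernel ν u := by unfold powKernel; gcongr; linarith

theorem powKernel_nonneg {u : ℝ} (hν : 0 ≤ ν) (hu : 0 ≤ u) : 0 ≤ powKernel ν u := by
  unfold powKernel; positivity

variable {m M : ℝ} {h : ℝ → ℝ}

theorem integrableOn_powKernel_comp (hmeas : Measurable h) (hm : 0 < m) (hba : b - a ≤ 1)
    (hh : ∀ s ∈ Ioo a b, h s ∈ Icc m M) :
    IntegrableOn (fun s => powKernel (h s) (b - s)) (Ioo a b) := by
  have hmeasK : Measurable fun s => powKernel (h s) (b - s) := by unfold powKernel; fun_prop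
  refine ((integrableOn_Ioo_powKernel_sub hm).const_mul (M / m)).mono'
    hmeasK.aestronglyMeasurable ((ae_restrict_iff' measurableSet_Ioo).2 ?_)
  refine .of_forall fun s hs => ?_
  have hνs := hh s hs
  rw [Real.norm_of_nonneg (powKernel_nonneg (by linarith [hνs.1]) (by linarith [hs.2]))]
  exact powKernel_le_div_mul_powKernel hm hνs.1 hνs.2 (by linarith [hs.2]) (by linarith [hs.1])

theorem setIntegral_powKernel_comp_le (hmeas : Measurable h) (hm : 0 < m) (hab : a ≤ b)
    (hba : b - a ≤ 1) (hh : ∀ s ∈ Ioo a b, h s ∈ Icc m M) :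
    ∫ s in Ioo a b, powKernel (h s) (b - s) ≤ M / m * (b - a) ^ (2 * m) := by
  calc ∫ s in Ioo a b, powKernel (h s) (b - s)
      ≤ ∫ s in Ioo a b, M / m * powKernel m (b - s) :=
        setIntegral_mono_on (integrableOn_powKernel_comp hmeas hm hba hh)
          ((integrableOn_Ioo_powKernel_sub hm).const_mul _)
          measurableSet_Ioo fun s hs => powKernel_le_div_mul_powKernel hm (hh s hs).1 (hh s hs).2
            (by linarith [hs.2]) (by linarith [hs.1])
    _ = M / m * (b - a) ^ (2 * m) := by
        rw [integral_const_mul, setIntegral_Ioo_powKernel_sub hm hab]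

theorem div_mul_rpow_le_setIntegral_powKernel_comp (hmeas : Measurable h) (hm : 0 < m)
    (hmM : m ≤ M) (hab : a ≤ b) (hba : b - a ≤ 1) (hh : ∀ s ∈ Ioo a b, h s ∈ Icc m M) :
    m / M * (b - a) ^ (2 * M) ≤ ∫ s in Ioo a b, powKernel (h s) (b - s) := by
  have hM : 0 < M := hm.trans_le hmM
  calc m / M * (b - a) ^ (2 * M) = ∫ s in Ioo a b, m / M * powKernel M (b - s) := by
        rw [integral_const_mul, setIntegral_Ioo_powKernel_sub hM hab]
    _ ≤ ∫ s in Ioo a b, powKernel (h s) (b - s) :=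
        setIntegral_mono_on
          ((integrableOn_Ioo_powKernel_sub hM).const_mul _)
          (integrableOn_powKernel_comp hmeas hm hba hh)
          measurableSet_Ioo fun s hs => div_mul_powKernel_le_powKernel hm (hh s hs).1 (hh s hs).2
            (by linarith [hs.2]) (by linarith [hs.1])

end

theorem stmt15_general (hmin hmax t ε : ℝ) (h0 : 0 < hmin)
    (hε : ε ∈ Set.Ioc (0:ℝ) 1)
    (h : ℝ → ℝ) (hmeas : Measurable h)
    (hrange : ∀ s ∈ Set.Icc t (t + ε), h s ∈ Set.Icc hmin hmax) :
    (hmin / hmax) * ε ^ (2 * sSup (h '' Set.Icc t (t + ε))) ≤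
        (∫ s in Set.Ioo t (t + ε), 2 * h s * (t + ε - s) ^ (2 * h s - 1)) ∧
      (∫ s in Set.Ioo t (t + ε), 2 * h s * (t + ε - s) ^ (2 * h s - 1)) ≤
        (hmax / hmin) * ε ^ (2 * sInf (h '' Set.Icc t (t + ε))) := by
  obtain ⟨hε₀, hε₁⟩ := hε
  set S := h '' Icc t (t + ε)
  have hS : S ⊆ Icc hmin hmax := image_subset_iff.2 hrange
  have hne : S.Nonempty := (nonempty_Icc.2 (by linarith)).image h
  have hInf_le_sSup : sInf S ≤ sSup S :=
    csInf_le_csSup hne (bddBelow_Icc.mono hS) (bddAbove_Icc.mono hS)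
  have hmin_le : hmin ≤ sInf S := le_csInf hne fun x hx => (hS hx).1
  have hSup_le : sSup S ≤ hmax := csSup_le hne fun x hx => (hS hx).2
  have hmem : ∀ s ∈ Ioo t (t + ε), h s ∈ Icc (sInf S) (sSup S) := fun s hs =>
    have hsS : h s ∈ S := mem_image_of_mem h (Ioo_subset_Icc_self hs)
    ⟨csInf_le (bddBelow_Icc.mono hS) hsS, le_csSup (bddAbove_Icc.mono hS) hsS⟩
  have hab : t ≤ t + ε := by linarith
  have hba : t + ε - t ≤ 1 := by linarith
  constructor
  · have hlow := div_mul_rpow_le_setIntegral_powKernel_comp hmeas h0 (hmin_le.trans hInf_le_sSup)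
      hab hba fun s hs => ⟨hmin_le.trans (hmem s hs).1, (hmem s hs).2⟩
    rw [add_sub_cancel_left] at hlow
    calc hmin / hmax * ε ^ (2 * sSup S) ≤ hmin / sSup S * ε ^ (2 * sSup S) := by
          gcongr; linarith
      _ ≤ _ := hlow
  · have hup := setIntegral_powKernel_comp_le hmeas (h0.trans_le hmin_le) hab hba
      fun s hs => ⟨(hmem s hs).1, (hmem s hs).2.trans hSup_le⟩
    rw [add_sub_cancel_left] at hup
    calc _ ≤ hmax / sInf S * ε ^ (2 * sInf S) := hup
      _ ≤ hmax / hmin * ε ^ (2 * sInf S) := by gcongr; linarith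

/-- Pathwise kernel norm scaling: with extremal indices
`H₋ = inf h, H₊ = sup h` over `[t, t+ε]`,
`(h_min/h_max) ε^(2H₊) ≤ ∫_t^{t+ε} 2h(s)(t+ε-s)^(2h(s)-1) ds ≤ (h_max/h_min) ε^(2H₋)`. -/
theorem stmt15 (hmin hmax t ε : ℝ) (h0 : 0 < hmin) (h1 : hmin ≤ hmax) (h2 : hmax < 1)
    (ht : 0 ≤ t) (hε : ε ∈ Set.Ioc (0:ℝ) 1)
    (h : ℝ → ℝ) (hmeas : Measurable h)
    (hrange : ∀ s ∈ Set.Icc t (t + ε), h s ∈ Set.Icc hmin hmax) :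
    (hmin / hmax) * ε ^ (2 * sSup (h '' Set.Icc t (t + ε))) ≤
        (∫ s in Set.Ioo t (t + ε), 2 * h s * (t + ε - s) ^ (2 * h s - 1)) ∧
      (∫ s in Set.Ioo t (t + ε), 2 * h s * (t + ε - s) ^ (2 * h s - 1)) ≤
        (hmax / hmin) * ε ^ (2 * sInf (h '' Set.Icc t (t + ε))) :=
  stmt15_general hmin hmax t ε h0 hε h hmeas hrange
end
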